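/- arXiv:1712.01463 — 3 statements merged into one kernel-verified Lean document; each statement's English description precedes it below -/
import Mathlib

section
/- Let k be a nonarchimedean local field with valuation ν and let α ∈ O_k* be a unit that is not a square. Let δ ∈ k minimize ν(δ² - α) over δ ∈ k. If L = k(√α), then for z = a + b√α with a, b ∈ k, b ≠ 0, the element ξ = a + bδ ∈ k minimizes the distance |z - ξ'| over ξ' ∈ k, and ν(z - ξ) = ν(b) + ½ν(δ² - α). -/
/-!
The conjugation `σ` turns the square of the absolute value into a norm:
`|√α - c|² = |(√α - c)(-√α - c)| = |c² - α|` for `c ∈ k`. Writing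
`z - ξ' = b (√α - (ξ' - a)/b)` therefore gives `|z - ξ'|² = |b|² |((ξ' - a)/b)² - α|`, which is
smallest when `(ξ' - a)/b = δ`, i.e. when `ξ' = a + bδ`.
-/

section Conjugation

variable {k L : Type*} [CommRing k] [CommRing L] [Algebra k L]
  (abs : AbsoluteValue L ℝ) (σ : L ≃ₐ[k] L)

theorem AbsoluteValue.sq_eq_apply_mul_conj (hinv : ∀ x : L, abs (σ x) = abs x) (x : L) :
    abs x ^ 2 = abs (x * σ x) := by
  rw [map_mul, hinv, sq]

variable {sα : L} {α : k}

theorem sub_algebraMap_mul_conj (hsα : sα ^ 2 = algebraMap k L α) (hσ : σ sα = -sα) (c : k) :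
    (sα - algebraMap k L c) * σ (sα - algebraMap k L c) = algebraMap k L (c ^ 2 - α) := by
  rw [map_sub, hσ, σ.commutes, map_sub, map_pow, ← hsα]
  ring

theorem AbsoluteValue.sub_algebraMap_sq (hsα : sα ^ 2 = algebraMap k L α) (hσ : σ sα = -sα)
    (hinv : ∀ x : L, abs (σ x) = abs x) (c : k) :
    abs (sα - algebraMap k L c) ^ 2 = abs (algebraMap k L (c ^ 2 - α)) := by
  rw [abs.sq_eq_apply_mul_conj σ hinv, sub_algebraMap_mul_conj σ hsα hσ]

end Conjugation

theorem add_mul_sub_algebraMap_eq_mul {k L : Type*} [Field k] [CommRing L] [Algebra k L]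
    (s : L) (a b c : k) (hb : b ≠ 0) :
    algebraMap k L a + algebraMap k L b * s - algebraMap k L c =
      algebraMap k L b * (s - algebraMap k L ((c - a) / b)) := by
  rw [mul_sub, ← map_mul, mul_div_cancel₀ _ hb, map_sub]
  ring

theorem closest_rational_point_general {k L : Type*} [Field k] [Field L] [Algebra k L]
    (abs : AbsoluteValue L ℝ)
    (sα : L) (α : k) (hsα : sα ^ 2 = algebraMap k L α)
    (σ : L ≃ₐ[k] L) (hσ : σ sα = -sα) (hinv : ∀ x : L, abs (σ x) = abs x)
    (δ : k) (hδ : ∀ δ' : k, abs (algebraMap k L (δ ^ 2 - α)) ≤ abs (algebraMap k L (δ' ^ 2 - α)))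
    (a b : k) (hb : b ≠ 0) :
    let z : L := algebraMap k L a + algebraMap k L b * sα
    let ξ : k := a + b * δ
    (∀ ξ' : k, abs (z - algebraMap k L ξ) ≤ abs (z - algebraMap k L ξ')) ∧
      (abs (z - algebraMap k L ξ)) ^ 2 =
        (abs (algebraMap k L b)) ^ 2 * abs (algebraMap k L (δ ^ 2 - α)) := by
  intro z ξ
  have dist_sq (ξ' : k) : abs (z - algebraMap k L ξ') ^ 2 =
      abs (algebraMap k L b) ^ 2 * abs (algebraMap k L (((ξ' - a) / b) ^ 2 - α)) := by
    rw [add_mul_sub_algebraMap_eq_mul sα a b ξ' hb, map_mul, mul_pow,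
      abs.sub_algebraMap_sq σ hsα hσ hinv]
  have hξ : (ξ - a) / b = δ := by
    rw [add_sub_cancel_left, mul_div_cancel_left₀ _ hb]
  refine ⟨fun ξ' => ?_, by rw [dist_sq, hξ]⟩
  refine (pow_le_pow_iff_left₀ (abs.nonneg _) (abs.nonneg _) two_ne_zero).mp ?_
  rw [dist_sq, dist_sq, hξ]
  exact mul_le_mul_of_nonneg_left (hδ _) (by positivity)

/-- Let `k ⊆ L = k(√α)` with a nonarchimedean absolute value on `L` invariant under the
conjugation `σ` (the unique extension of the absolute value of `k`). Let `δ ∈ k` minimize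
`|δ'² - α|` over `δ' ∈ k` (so `(δ² - α)` is the quadratic defect of the nonsquare unit `α`).
Then for `z = a + b√α` with `b ≠ 0`, the element `ξ = a + bδ ∈ k` minimizes `|z - ξ'|`
over `ξ' ∈ k`, and `ν(z - ξ) = ν(b) + ½ν(δ² - α)`, i.e. `|z - ξ|² = |b|²·|δ² - α|`. -/
theorem closest_rational_point {k L : Type*} [Field k] [Field L] [Algebra k L]
    (abs : AbsoluteValue L ℝ)
    (hna : ∀ x y : L, abs (x + y) ≤ max (abs x) (abs y))
    (sα : L) (α : k) (hsα : sα ^ 2 = algebraMap k L α)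
    (hns : ¬∃ c : k, c ^ 2 = α)
    (σ : L ≃ₐ[k] L) (hσ : σ sα = -sα) (hinv : ∀ x : L, abs (σ x) = abs x)
    (δ : k) (hδ : ∀ δ' : k, abs (algebraMap k L (δ ^ 2 - α)) ≤ abs (algebraMap k L (δ' ^ 2 - α)))
    (a b : k) (hb : b ≠ 0) :
    let z : L := algebraMap k L a + algebraMap k L b * sα
    let ξ : k := a + b * δ
    (∀ ξ' : k, abs (z - algebraMap k L ξ) ≤ abs (z - algebraMap k L ξ')) ∧
      (abs (z - algebraMap k L ξ)) ^ 2 =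
        (abs (algebraMap k L b)) ^ 2 * abs (algebraMap k L (δ ^ 2 - α)) :=
  closest_rational_point_general abs sα α hsα σ hσ hinv δ hδ a b hb
end

section
/- Let k be a field of characteristic not 2, and suppose α, β, λ ∈ k satisfy λ² = αβ with α, β ≠ 0. If i, j ∈ M₂(k) satisfy i² = α, j² = β, ij + ji = 2λ, and i, j are linearly independent over k, then α is a square in k. -/
/-- Degenerate case of Lemma 5.1: if `λ² = αβ` with `αβ ≠ 0` and there exist linearly
independent `i, j ∈ M₂(k)` with `i² = α`, `j² = β`, `ij + ji = 2λ`, then `α` is a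
square in `k`. -/
theorem degenerate_case_square {k : Type*} [Field k] (hchar : (2 : k) ≠ 0)
    (α β lam : k) (hαβ : α * β ≠ 0) (hlam : lam ^ 2 = α * β)
    (i j : Matrix (Fin 2) (Fin 2) k)
    (hi : i * i = α • (1 : Matrix (Fin 2) (Fin 2) k))
    (hj : j * j = β • (1 : Matrix (Fin 2) (Fin 2) k))
    (hij : i * j + j * i = (2 * lam) • (1 : Matrix (Fin 2) (Fin 2) k))
    (hind : LinearIndependent k ![i, j]) :
    ∃ c : k, c ^ 2 = α := by
  have hα : α ≠ 0 := left_ne_zero_of_mul hαβ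
  have hβ : β ≠ 0 := right_ne_zero_of_mul hαβ
  -- entry equations
  have hi00 : i 0 0 * i 0 0 + i 0 1 * i 1 0 = α := by
    have h := congrFun (congrFun hi 0) 0
    simpa [Matrix.mul_apply, Fin.sum_univ_two, Matrix.one_apply] using h
  have hi01 : i 0 0 * i 0 1 + i 0 1 * i 1 1 = 0 := by
    have h := congrFun (congrFun hi 0) 1
    simpa [Matrix.mul_apply, Fin.sum_univ_two, Matrix.one_apply] using h
  have hj00 : j 0 0 * j 0 0 + j 0 1 * j 1 0 = β := by
    have h := congrFun (congrFun hj 0) 0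
    simpa [Matrix.mul_apply, Fin.sum_univ_two, Matrix.one_apply] using h
  have hj01 : j 0 0 * j 0 1 + j 0 1 * j 1 1 = 0 := by
    have h := congrFun (congrFun hj 0) 1
    simpa [Matrix.mul_apply, Fin.sum_univ_two, Matrix.one_apply] using h
  have hij00 : i 0 0 * j 0 0 + i 0 1 * j 1 0 + (j 0 0 * i 0 0 + j 0 1 * i 1 0)
      = 2 * lam := by
    have h := congrFun (congrFun hij 0) 0
    simpa [Matrix.mul_apply, Fin.sum_univ_two, Matrix.one_apply] using h
  by_cases htri : i 0 0 + i 1 1 = 0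
  · by_cases htrj : j 0 0 + j 1 1 = 0
    · -- main case
      set a := i 0 0 with ha
      set b := i 0 1 with hb
      set c := i 1 0 with hc
      set d := j 0 0 with hd
      set e := j 0 1 with he
      set f := j 1 0 with hf
      set p := β * a - lam * d with hp
      set q := β * b - lam * e with hqdef
      set r := β * c - lam * f with hr
      have hpq : p ^ 2 + q * r = 0 := by
        rw [hp, hqdef, hr]
        linear_combination β ^ 2 * hi00 + lam ^ 2 * hj00 - β * lam * hij00 - β * hlam
      have hanti : 2 * a * p + b * r + c * q = 0 := by
        rw [hp, hqdef, hr]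
        linear_combination 2 * β * hi00 - lam * hij00 - 2 * hlam
      have hne : ¬ (p = 0 ∧ q = 0 ∧ r = 0) := by
        rintro ⟨hp0, hq0, hr0⟩
        have hzero : β • i + (-lam) • j = 0 := by
          ext x y
          fin_cases x <;> fin_cases y <;>
            simp only [Matrix.add_apply, Matrix.smul_apply, Matrix.zero_apply,
              smul_eq_mul, Fin.mk_zero, Fin.mk_one]
          · linear_combination hp0
          · linear_combination hq0
          · linear_combination hr0
          · linear_combination β * htri - lam * htrj - hp0
        have := (LinearIndependent.pair_iff.mp hind β (-lam) hzero).1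
        exact hβ this
      by_cases hq : q = 0
      · have hp0 : p = 0 := by
          have : p ^ 2 = 0 := by linear_combination hpq - r * hq
          exact pow_eq_zero_iff (n := 2) (by norm_num) |>.mp this
        have hr0 : r ≠ 0 := fun h => hne ⟨hp0, hq, h⟩
        have hb0 : b = 0 := by
          have : b * r = 0 := by linear_combination hanti - 2 * a * hp0 - c * hq
          exact (mul_eq_zero.mp this).resolve_right hr0
        exact ⟨a, by linear_combination hi00 - c * hb0⟩
      · refine ⟨(a * q - b * p) / q, ?_⟩
        field_simp
        linear_combination q ^ 2 * hi00 - b * q * hanti + b ^ 2 * hpq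
    · -- j has nonzero trace: e = 0, β = d²
      have he0 : j 0 1 = 0 := by
        have : j 0 1 * (j 0 0 + j 1 1) = 0 := by linear_combination hj01
        exact (mul_eq_zero.mp this).resolve_right htrj
      have hd2 : j 0 0 * j 0 0 = β := by linear_combination hj00 - j 1 0 * he0
      have hd0 : j 0 0 ≠ 0 := by
        intro h
        exact hβ (by linear_combination -hd2 + (j 0 0 + 0) * h)
      refine ⟨lam / j 0 0, ?_⟩
      field_simp
      linear_combination hlam - α * hd2
  · -- i has nonzero trace: b = 0, α = a²
    have hb0 : i 0 1 = 0 := by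
      have : i 0 1 * (i 0 0 + i 1 1) = 0 := by linear_combination hi01
      exact (mul_eq_zero.mp this).resolve_right htri
    exact ⟨i 0 0, by linear_combination hi00 - i 1 0 * hb0⟩
end

section
/- Let k be a field of characteristic not 2 and α, β, λ ∈ k with αβ ≠ 0, λ² ≠ αβ. Suppose there exist a, b, c, d ∈ k with bd ≠ 0 and λ = (b²α + d²β - (a-c)²)/(2bd). Then the k-algebra generated by i, j with relations i² = α, j² = β, ij + ji = 2λ is isomorphic to M₂(k). In particular, for λ = 0 this recovers: the quaternion algebra (α,β/k) splits iff the form b²α + d²β - e² is isotropic. -/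
open FreeAlgebra in
/-- Defining relations of the algebra `A(α,β,λ) = k⟨i,j | i² = α, j² = β, ij + ji = 2λ⟩`. -/
inductive GenRel (k : Type*) [Field k] (α β lam : k) :
    FreeAlgebra k Bool → FreeAlgebra k Bool → Prop
  | isq : GenRel k α β lam (ι k true * ι k true) (algebraMap k _ α)
  | jsq : GenRel k α β lam (ι k false * ι k false) (algebraMap k _ β)
  | anticomm : GenRel k α β lam (ι k true * ι k false + ι k false * ι k true)
      (algebraMap k _ (2 * lam))

/-- The algebra `A(α,β,λ)` given by generators `i, j` and relations
`i² = α`, `j² = β`, `ij + ji = 2λ`. -/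
abbrev GenAlg (k : Type*) [Field k] (α β lam : k) := RingQuot (GenRel k α β lam)

/-!
With `x = (a - c) / d` and `y = b / d` the hypothesis reads `x² = αy² - 2λy + β`, which is
exactly what makes `I = [[0, 1], [α, 0]]` and `J = [[x, y], [2λ - αy, -x]]` satisfy
`I² = α`, `J² = β`, `IJ + JI = 2λ`; so `i ↦ I`, `j ↦ J` defines `A(α,β,λ) → M₂(k)`.
The algebra `A(α,β,λ)` is spanned by `1, i, j, ij`, while `1, I, J, IJ` are linearly
independent as soon as `2 ≠ 0` and `λ² ≠ αβ`. Hence the map is a surjection from a space of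
dimension at most `4` onto `M₂(k)`, and therefore an isomorphism.
-/

open Module FreeAlgebra

theorem Submodule.eq_top_of_one_mem_of_mul_mem {R A : Type*} [CommSemiring R] [Semiring A]
    [Algebra R A] {s : Set A} (hs : Algebra.adjoin R s = ⊤) {S : Submodule R A}
    (h1 : (1 : A) ∈ S) (hmul : ∀ x ∈ s, ∀ y ∈ S, x * y ∈ S) : S = ⊤ := by
  have key : ∀ x ∈ Algebra.adjoin R s, ∀ y ∈ S, x * y ∈ S := by
    intro x hx
    induction hx using Algebra.adjoin_induction with
    | mem x hx => exact hmul x hx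
    | algebraMap r =>
      intro y hy
      rw [Algebra.algebraMap_eq_smul_one, smul_mul_assoc, one_mul]
      exact S.smul_mem r hy
    | add x y _ _ hx hy => intro z hz; rw [add_mul]; exact S.add_mem (hx z hz) (hy z hz)
    | mul x y _ _ hx hy => intro z hz; rw [mul_assoc]; exact hx _ (hy z hz)
  exact eq_top_iff.2 fun x _ => mul_one x ▸ key x (hs ▸ Algebra.mem_top) 1 h1

namespace GenAlg

variable {k : Type*} [Field k] {α β lam : k}

def i : GenAlg k α β lam := RingQuot.mkAlgHom k _ (ι k true)

def j : GenAlg k α β lam := RingQuot.mkAlgHom k _ (ι k false)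

theorem i_mul_i : (i : GenAlg k α β lam) * i = algebraMap k _ α := by
  rw [i, ← map_mul, RingQuot.mkAlgHom_rel k GenRel.isq, AlgHom.commutes]

theorem j_mul_j : (j : GenAlg k α β lam) * j = algebraMap k _ β := by
  rw [j, ← map_mul, RingQuot.mkAlgHom_rel k GenRel.jsq, AlgHom.commutes]

theorem i_mul_j_add_j_mul_i :
    (i : GenAlg k α β lam) * j + j * i = algebraMap k _ (2 * lam) := by
  rw [i, j, ← map_mul, ← map_mul, ← map_add, RingQuot.mkAlgHom_rel k GenRel.anticomm,
    AlgHom.commutes]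

theorem j_mul_i : (j : GenAlg k α β lam) * i = algebraMap k _ (2 * lam) - i * j :=
  eq_sub_of_add_eq' i_mul_j_add_j_mul_i

theorem adjoin_i_j : Algebra.adjoin k {i, j} = (⊤ : Subalgebra k (GenAlg k α β lam)) := by
  have hrange : ({i, j} : Set (GenAlg k α β lam)) =
      RingQuot.mkAlgHom k (GenRel k α β lam) '' Set.range (ι k) := by
    ext; simp [i, j, or_comm, eq_comm]
  rw [hrange, Algebra.adjoin_image, adjoin_range_ι, Algebra.map_top,
    (AlgHom.range_eq_top _).2 (RingQuot.mkAlgHom_surjective k _)]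

variable (α β lam) in
theorem span_one_i_j_ij_eq_top :
    Submodule.span k (Set.range ![1, i, j, i * j]) = (⊤ : Submodule k (GenAlg k α β lam)) := by
  set S := Submodule.span k (Set.range ![(1 : GenAlg k α β lam), i, j, i * j])
  have mem : ∀ n, ![(1 : GenAlg k α β lam), i, j, i * j] n ∈ S :=
    fun n => Submodule.subset_span ⟨n, rfl⟩
  have algebraMap_mul_mem (c : k) {g : GenAlg k α β lam} (hg : g ∈ S) :
      algebraMap k _ c * g ∈ S := by
    rw [Algebra.algebraMap_eq_smul_one, smul_mul_assoc, one_mul]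
    exact S.smul_mem c hg
  refine Submodule.eq_top_of_one_mem_of_mul_mem adjoin_i_j (mem 0) ?_
  intro x hx y hy
  induction hy using Submodule.span_induction with
  | mem g hg =>
    obtain ⟨n, rfl⟩ := hg
    rcases hx with rfl | rfl <;> fin_cases n
    · show i * 1 ∈ S
      rw [mul_one]
      exact mem 1
    · show i * i ∈ S
      rw [i_mul_i, ← mul_one (algebraMap k _ _)]
      exact algebraMap_mul_mem α (mem 0)
    · exact mem 3
    · show i * (i * j) ∈ S
      rw [← mul_assoc, i_mul_i]
      exact algebraMap_mul_mem α (mem 2)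
    · show j * 1 ∈ S
      rw [mul_one]
      exact mem 2
    · show j * i ∈ S
      rw [j_mul_i, ← mul_one (algebraMap k _ _)]
      exact S.sub_mem (algebraMap_mul_mem _ (mem 0)) (mem 3)
    · show j * j ∈ S
      rw [j_mul_j, ← mul_one (algebraMap k _ _)]
      exact algebraMap_mul_mem β (mem 0)
    · show j * (i * j) ∈ S
      rw [← mul_assoc, j_mul_i, sub_mul, mul_assoc, j_mul_j, ← Algebra.commutes]
      exact S.sub_mem (algebraMap_mul_mem _ (mem 2)) (algebraMap_mul_mem β (mem 1))
  | zero => rw [mul_zero]; exact S.zero_mem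
  | add u w _ _ hu hw => rw [mul_add]; exact S.add_mem hu hw
  | smul c u _ hu => rw [mul_smul_comm]; exact S.smul_mem c hu

instance : Module.Finite k (GenAlg k α β lam) :=
  Module.finite_def.2 (span_one_i_j_ij_eq_top α β lam ▸ Submodule.fg_span (Set.finite_range _))

variable (α β lam) in
theorem finrank_le_four : finrank k (GenAlg k α β lam) ≤ 4 := by
  simpa using finrank_le_of_span_eq_top (span_one_i_j_ij_eq_top α β lam)

section lift

variable {A : Type*} [Ring A] [Algebra k A] (I J : A) (hI : I * I = algebraMap k A α)
  (hJ : J * J = algebraMap k A β) (hIJ : I * J + J * I = algebraMap k A (2 * lam))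

def lift : GenAlg k α β lam →ₐ[k] A :=
  RingQuot.liftAlgHom k ⟨FreeAlgebra.lift k fun b => cond b I J, fun _ _ r => by
    cases r <;> simp only [map_mul, map_add, lift_ι_apply, AlgHom.commutes, cond_true, cond_false,
      hI, hJ, hIJ]⟩

@[simp]
theorem lift_i : lift I J hI hJ hIJ i = I := by
  simp [lift, i]

@[simp]
theorem lift_j : lift I J hI hJ hIJ j = J := by
  simp [lift, j]

end lift

def matrixI (α : k) : Matrix (Fin 2) (Fin 2) k := !![0, 1; α, 0]

def matrixJ (α lam x y : k) : Matrix (Fin 2) (Fin 2) k := !![x, y; 2 * lam - α * y, -x]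

theorem matrixI_mul_self : matrixI α * matrixI α = algebraMap k _ α := by
  ext p q
  fin_cases p <;> fin_cases q <;> simp [matrixI, Matrix.algebraMap_matrix_apply]

theorem matrixJ_mul_self {x y : k} (hxy : x ^ 2 = α * y ^ 2 - 2 * lam * y + β) :
    matrixJ α lam x y * matrixJ α lam x y = algebraMap k _ β := by
  ext p q
  fin_cases p <;> fin_cases q <;> simp [matrixJ, Matrix.algebraMap_matrix_apply] <;>
    first | ring1 | linear_combination hxy

theorem matrixI_mul_matrixJ_add (x y : k) :
    matrixI α * matrixJ α lam x y + matrixJ α lam x y * matrixI α =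
      algebraMap k _ (2 * lam) := by
  ext p q
  fin_cases p <;> fin_cases q <;>
    simp [matrixI, matrixJ, Matrix.algebraMap_matrix_apply] <;> ring

theorem matrixI_mul_matrixJ (x y : k) :
    matrixI α * matrixJ α lam x y = !![2 * lam - α * y, -x; α * x, α * y] := by
  ext p q
  fin_cases p <;> fin_cases q <;> simp [matrixI, matrixJ]

theorem linearIndependent_one_matrixI_matrixJ_mul (hchar : (2 : k) ≠ 0)
    (hlam : lam ^ 2 ≠ α * β) {x y : k} (hxy : x ^ 2 = α * y ^ 2 - 2 * lam * y + β) :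
    LinearIndependent k ![1, matrixI α, matrixJ α lam x y, matrixI α * matrixJ α lam x y] := by
  rw [Fintype.linearIndependent_iff]
  intro g hg
  rw [Fin.sum_univ_four, matrixI_mul_matrixJ] at hg
  have e00 := congrFun₂ hg 0 0
  have e01 := congrFun₂ hg 0 1
  have e10 := congrFun₂ hg 1 0
  have e11 := congrFun₂ hg 1 1
  simp [matrixI, matrixJ] at e00 e01 e10 e11
  have hD : (α * β - lam ^ 2) * 4 ≠ 0 :=
    mul_ne_zero (sub_ne_zero.2 hlam.symm) (by simpa [show (4 : k) = 2 * 2 by norm_num])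
  have h2 : g 2 = 0 := by
    refine (mul_eq_zero.1 ?_).resolve_right hD
    linear_combination 2 * α * x * e00 - 2 * α * x * e11 - 2 * (lam - α * y) * e10 +
      2 * α * (lam - α * y) * e01 - g 2 * α * 4 * hxy
  have h3 : g 3 = 0 := by
    refine (mul_eq_zero.1 ?_).resolve_right hD
    linear_combination 2 * x * e10 - 2 * α * x * e01 - 2 * (lam - α * y) * e00 +
      2 * (lam - α * y) * e11 - g 3 * α * 4 * hxy
  have h0 : g 0 = 0 := by simpa [h2, h3] using e00
  have h1 : g 1 = 0 := by simpa [h2, h3] using e01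
  intro n
  fin_cases n <;> assumption

theorem nonempty_algEquiv_matrix_of_sq_eq (hchar : (2 : k) ≠ 0) (hlam : lam ^ 2 ≠ α * β)
    {x y : k} (hxy : x ^ 2 = α * y ^ 2 - 2 * lam * y + β) :
    Nonempty (GenAlg k α β lam ≃ₐ[k] Matrix (Fin 2) (Fin 2) k) := by
  let φ := lift (matrixI α) (matrixJ α lam x y) matrixI_mul_self (matrixJ_mul_self hxy)
    (matrixI_mul_matrixJ_add x y)
  have hφ : φ ∘ ![1, i, j, i * j] =
      ![1, matrixI α, matrixJ α lam x y, matrixI α * matrixJ α lam x y] := by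
    ext1 n; fin_cases n <;> simp [φ]
  have hsurj : Function.Surjective φ := by
    refine (LinearMap.range_eq_top (f := φ.toLinearMap)).1 ?_
    rw [← Submodule.map_top, ← span_one_i_j_ij_eq_top, Submodule.map_span, ← Set.range_comp,
      AlgHom.coe_toLinearMap, hφ]
    exact (linearIndependent_one_matrixI_matrixJ_mul hchar hlam hxy)
      |>.span_eq_top_of_card_eq_finrank (by simp [Module.finrank_matrix])
  have hdim : finrank k (GenAlg k α β lam) ≤ finrank k (Matrix (Fin 2) (Fin 2) k) := by
    simpa [Module.finrank_matrix] using finrank_le_four α β lam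
  exact ⟨.ofBijective φ
    (OrzechProperty.bijective_of_surjective_of_finrank_le φ.toLinearMap hsurj hdim)⟩

end GenAlg

theorem div_sq_eq_of_eq_div {k : Type*} [Field k] (hchar : (2 : k) ≠ 0) {α β lam a b c d : k}
    (hbd : b * d ≠ 0) (hlam : lam = (b ^ 2 * α + d ^ 2 * β - (a - c) ^ 2) / (2 * b * d)) :
    ((a - c) / d) ^ 2 = α * (b / d) ^ 2 - 2 * lam * (b / d) + β := by
  have hb : b ≠ 0 := left_ne_zero_of_mul hbd
  have hd : d ≠ 0 := right_ne_zero_of_mul hbd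
  rw [hlam]
  field_simp
  ring

theorem genAlg_split_general {k : Type*} [Field k] (hchar : (2 : k) ≠ 0)
    (α β lam : k) (hlam : lam ^ 2 ≠ α * β)
    (h : ∃ a b c d : k, b * d ≠ 0 ∧
      lam = (b ^ 2 * α + d ^ 2 * β - (a - c) ^ 2) / (2 * b * d)) :
    Nonempty (GenAlg k α β lam ≃ₐ[k] Matrix (Fin 2) (Fin 2) k) := by
  obtain ⟨a, b, c, d, hbd, hl⟩ := h
  exact GenAlg.nonempty_algEquiv_matrix_of_sq_eq hchar hlam (div_sq_eq_of_eq_div hchar hbd hl)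

/-- If `λ² ≠ αβ ≠ 0` and there are `a, b, c, d ∈ k` with `bd ≠ 0` and
`λ = (b²α + d²β - (a-c)²)/(2bd)`, then `A(α,β,λ) ≅ M₂(k)`. -/
theorem genAlg_split {k : Type*} [Field k] (hchar : (2 : k) ≠ 0)
    (α β lam : k) (hαβ : α * β ≠ 0) (hlam : lam ^ 2 ≠ α * β)
    (h : ∃ a b c d : k, b * d ≠ 0 ∧
      lam = (b ^ 2 * α + d ^ 2 * β - (a - c) ^ 2) / (2 * b * d)) :
    Nonempty (GenAlg k α β lam ≃ₐ[k] Matrix (Fin 2) (Fin 2) k) :=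
  genAlg_split_general hchar α β lam hlam h
end
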